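/- arXiv:1810.12103 — 3 statements merged into one kernel-verified Lean document; each statement's English description precedes it below -/
import Mathlib

section
/- For every integer k, every z ∈ ℂ and every z̲ ∈ ℤ, the lens theta functions satisfy θ_τ(z+2kr, z̲) = θ_τ(z, z̲), θ_σ(z+2kr, z̲) = θ_σ(z, z̲), θ_τ(z, z̲+kr) = θ_τ(z, z̲), and θ_σ(z, z̲+kr) = θ_σ(z, z̲). -/
open Complex

noncomputable section

/-- `π` as a complex number. -/
def cπ : ℂ := Real.pi

/-- The infinite q-Pochhammer symbol `(w;q)_∞ = ∏_{j=0}^∞ (1 - w q^j)`. -/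
def pochinf (w q : ℂ) : ℂ := ∏' j : ℕ, (1 - w * q ^ j)

/-- The theta function `θ(w|q) = (w;q)_∞ (q w⁻¹;q)_∞`. -/
def jtheta (w q : ℂ) : ℂ := pochinf w q * pochinf (q * w⁻¹) q

/-- `e^{2πi x}`. -/
def e2pi (x : ℂ) : ℂ := Complex.exp (2 * cπ * Complex.I * x)

/-- Normalisation `φ_τ` for the lens theta function `θ_τ`. -/
def phiTau (r : ℕ) (σ τ z zb : ℂ) : ℂ :=
  cπ * Complex.I / (6 * (r : ℂ)) *
    (3 * ((r : ℂ) + 1 - 2 * zb) * (2 * z + 1) - ((r : ℂ) ^ 2 - 1) * (σ - τ - 1) -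
      6 * zb * ((r : ℂ) - zb) * (τ + 1))

/-- Normalisation `φ_σ` for the lens theta function `θ_σ`. -/
def phiSigma (r : ℕ) (σ τ z zb : ℂ) : ℂ :=
  -(cπ * Complex.I / (6 * (r : ℂ))) *
    (3 * ((r : ℂ) - 1 - 2 * zb) * (2 * z - 1) - ((r : ℂ) ^ 2 - 1) * (σ - τ - 1) +
      6 * zb * ((r : ℂ) - zb) * (σ - 1))

/-- The lens theta function `θ_τ(z,z̲)`. -/
def thetaTau (r : ℕ) (σ τ z zb : ℂ) : ℂ :=
  Complex.exp (phiTau r σ τ z zb) * jtheta (e2pi (-z) * e2pi (τ * zb)) (e2pi (τ * (r : ℂ)))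

/-- The lens theta function `θ_σ(z,z̲)`. -/
def thetaSigma (r : ℕ) (σ τ z zb : ℂ) : ℂ :=
  Complex.exp (phiSigma r σ τ z zb) * jtheta (e2pi z * e2pi (σ * zb)) (e2pi (σ * (r : ℂ)))

/-- The infinite-product factor `γ_σ(z,z̲)` of the lens elliptic gamma function. -/
def gammaSigmaF (r : ℕ) (σ τ z zb : ℂ) : ℂ :=
  ∏' p : ℕ × ℕ,
    (1 - e2pi (-z) * e2pi (-(σ * zb)) * e2pi ((σ + τ) * ((p.1 : ℂ) + 1)) *
        e2pi (σ * (r : ℂ) * ((p.2 : ℂ) + 1))) /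
    (1 - e2pi z * e2pi (σ * zb) * e2pi ((σ + τ) * (p.1 : ℂ)) * e2pi (σ * (r : ℂ) * (p.2 : ℂ)))

/-- The infinite-product factor `γ_τ(z,z̲)` of the lens elliptic gamma function. -/
def gammaTauF (r : ℕ) (σ τ z zb : ℂ) : ℂ :=
  ∏' p : ℕ × ℕ,
    (1 - e2pi (-z) * e2pi (-(τ * ((r : ℂ) - zb))) * e2pi ((σ + τ) * ((p.1 : ℂ) + 1)) *
        e2pi (τ * (r : ℂ) * ((p.2 : ℂ) + 1))) /
    (1 - e2pi z * e2pi (τ * ((r : ℂ) - zb)) * e2pi ((σ + τ) * (p.1 : ℂ)) *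
        e2pi (τ * (r : ℂ) * (p.2 : ℂ)))

/-- Normalisation `φ_e` of the lens elliptic gamma function. -/
def phiE (r : ℕ) (σ τ z zb : ℂ) : ℂ :=
  cπ * Complex.I *
    (zb * (zb - (r : ℂ)) * (6 * z - 3 * σ - 3 * τ + (1 - σ + τ) * ((r : ℂ) - 2 * zb))) /
    (6 * (r : ℂ))

/-- The lens elliptic gamma function `Γ(z,z̲)`. -/
def lensGamma (r : ℕ) (σ τ z zb : ℂ) : ℂ :=
  Complex.exp (phiE r σ τ z zb) * gammaSigmaF r σ τ z zb * gammaTauF r σ τ z zb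

/-- The triple infinite product `g_σ(z,z̲;σ,τ,ω)`. -/
def gS (r : ℕ) (σ τ ω z zb : ℂ) : ℂ :=
  ∏' k : ℕ × ℕ × ℕ,
    (1 - e2pi z * e2pi (σ * zb) * e2pi (σ * (r : ℂ) * (k.1 : ℂ)) *
        e2pi ((σ + τ) * (k.2.1 : ℂ)) * e2pi ((σ + ω) * (k.2.2 : ℂ)))

/-- The triple infinite product `g_τ(z,z̲;σ,τ,ω)`. -/
def gT (r : ℕ) (σ τ ω z zb : ℂ) : ℂ :=
  ∏' k : ℕ × ℕ × ℕ,
    (1 - e2pi z * e2pi (τ * ((r : ℂ) - zb)) * e2pi (τ * (r : ℂ) * (k.1 : ℂ)) *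
        e2pi ((σ + τ) * (k.2.1 : ℂ)) * e2pi (ω * (k.2.2 : ℂ)))

/-- `γ⁺_σ(z,z̲;σ,τ,ω)`. -/
def gammaPlusSigma (r : ℕ) (σ τ ω z zb : ℂ) : ℂ :=
  gS r σ τ ω z zb * gS r σ τ ω (σ + τ + ω - z) ((r : ℂ) + 1 - zb)

/-- `γ⁺_τ(z,z̲;σ,τ,ω)`. -/
def gammaPlusTau (r : ℕ) (σ τ ω z zb : ℂ) : ℂ :=
  gT r σ τ ω z zb * gT r σ τ ω (σ + τ + ω - z) ((r : ℂ) - zb)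

/-- The multiple Bernoulli polynomial `B_{3,3}(z;ω₁,ω₂,ω₃)`. -/
def B33 (z w1 w2 w3 : ℂ) : ℂ :=
  z ^ 3 / (w1 * w2 * w3) - 3 * z ^ 2 * (w1 + w2 + w3) / (2 * (w1 * w2 * w3)) +
    z * ((w1 ^ 2 + w2 ^ 2 + w3 ^ 2) + 3 * (w1 * w2 + w1 * w3 + w2 * w3)) /
      (2 * (w1 * w2 * w3)) -
    (w1 + w2 + w3) * (w1 * w2 + w1 * w3 + w2 * w3) / (4 * (w1 * w2 * w3))

/-- The multiple Bernoulli polynomial `B_{4,4}(z;ω₁,ω₂,ω₃,ω₄)`. -/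
def B44 (z w1 w2 w3 w4 : ℂ) : ℂ :=
  z ^ 4 / (w1 * w2 * w3 * w4) -
    2 * z ^ 3 * (w1 + w2 + w3 + w4) / (w1 * w2 * w3 * w4) +
    z ^ 2 * ((w1 ^ 2 + w2 ^ 2 + w3 ^ 2 + w4 ^ 2) +
        3 * (w1 * w2 + w1 * w3 + w1 * w4 + w2 * w3 + w2 * w4 + w3 * w4)) /
      (w1 * w2 * w3 * w4) -
    z * (w1 + w2 + w3 + w4) *
        (w1 * w2 + w1 * w3 + w1 * w4 + w2 * w3 + w2 * w4 + w3 * w4) /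
      (w1 * w2 * w3 * w4) -
    ((w1 ^ 4 + w2 ^ 4 + w3 ^ 4 + w4 ^ 4) -
        5 * ((w1 * w2) ^ 2 + (w1 * w3) ^ 2 + (w1 * w4) ^ 2 + (w2 * w3) ^ 2 + (w2 * w4) ^ 2 +
            (w3 * w4) ^ 2) -
        15 * (w1 ^ 2 * (w2 * w3 + w2 * w4 + w3 * w4) + w2 ^ 2 * (w1 * w3 + w1 * w4 + w3 * w4) +
            w3 ^ 2 * (w1 * w2 + w1 * w4 + w2 * w4) + w4 ^ 2 * (w1 * w2 + w1 * w3 + w2 * w3)) -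
        45 * (w1 * w2 * w3 * w4)) /
      (30 * (w1 * w2 * w3 * w4))

/-- `S(z;σ,τ,ω) = (B_{4,4}(z;σ,τ,−1,ω) + B_{4,4}(z−1;σ,τ,−1,ω))/48`. -/
def Sfun (z a b c : ℂ) : ℂ := (B44 z a b (-1) c + B44 (z - 1) a b (-1) c) / 48

/-- `S₂(z,z̲;σ,τ,ω)`. -/
def S2 (r : ℕ) (σ τ ω z zb : ℂ) : ℂ :=
  Sfun (z + zb * σ) ((r : ℂ) * σ) (σ + τ) (ω + σ) +
    Sfun (z + ((r : ℂ) - zb) * τ) ((r : ℂ) * τ) (σ + τ) (ω - τ)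

/-- `T₂(z,z̲;σ,τ,ω)`. -/
def T2 (r : ℕ) (σ τ ω z zb : ℂ) : ℂ :=
  Sfun (z + zb * σ) ((r : ℂ) * σ) (σ + τ) ω +
    Sfun (z + ((r : ℂ) - zb) * τ) ((r : ℂ) * τ) (σ + τ) ω

/-- Normalisation `φ⁺(z,z̲;σ,τ,ω)` of the lens triple gamma function. -/
def phiPlus (r : ℕ) (σ τ ω z zb : ℂ) : ℂ :=
  2 * cπ * Complex.I *
    (T2 r (σ - 1 / 2) (τ + 1 / 2) ω z 0 - S2 r (σ - 1 / 2) (τ + 1 / 2) ω z zb)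

/-- The lens triple gamma function `Γ⁺_σ(z,z̲;σ,τ,ω)`. -/
def GammaPlusSigma (r : ℕ) (σ τ ω z zb : ℂ) : ℂ :=
  Complex.exp (phiPlus r σ τ ω z zb) * gammaPlusSigma r σ τ ω z zb

/-- The lens triple gamma function `Γ⁺_{στ}(z,z̲;σ,τ,ω,μ)`. -/
def GammaPlusSigmaTau (r : ℕ) (σ τ ω μ z zb : ℂ) : ℂ :=
  GammaPlusSigma r σ τ ω z zb * gammaPlusTau r σ τ μ z zb

/-- The prefactor `λ(σ,τ)`. -/
def lam (r : ℕ) (σ τ : ℂ) : ℂ :=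
  pochinf (e2pi ((r : ℂ) * σ)) (e2pi ((r : ℂ) * σ)) *
    pochinf (e2pi ((r : ℂ) * τ)) (e2pi ((r : ℂ) * τ))

/-- The shifted discrete summation variable `z̃`. -/
def zt (r : ℕ) (xb : Fin 8 → ℚ) (zb : ℕ) : ℚ :=
  (zb : ℚ) + ((r : ℚ) + (((r + 1) % 2 : ℕ) : ℚ)) * Int.fract (xb 1)

/-- The elliptic hypergeometric sum/integral `I(x,x̲)`. -/
def Ihyp (r : ℕ) (σ τ : ℂ) (x : Fin 8 → ℂ) (xb : Fin 8 → ℚ) : ℂ :=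
  lam r σ τ / 2 *
    ∑ zb ∈ Finset.range r, ∫ z in (0:ℝ)..(1:ℝ),
      (∏ j : Fin 8,
          lensGamma r σ τ (x j + (z : ℂ)) ((xb j + zt r xb zb : ℚ) : ℂ) *
            lensGamma r σ τ (x j - (z : ℂ)) ((xb j - zt r xb zb : ℚ) : ℂ)) /
      (lensGamma r σ τ (2 * (z : ℂ)) ((2 * zt r xb zb : ℚ) : ℂ) *
        lensGamma r σ τ (-(2 * (z : ℂ))) ((-(2 * zt r xb zb) : ℚ) : ℂ))

/-- The shifted theta product `θ_σ(x,x̲)_k = ∏_{j=0}^{k−1} θ_σ(x+jτ, x̲+j)`. -/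
def thetaK (r : ℕ) (σ τ x xb : ℂ) (k : ℕ) : ℂ :=
  ∏ j ∈ Finset.range k, thetaSigma r σ τ (x + (j : ℂ) * τ) (xb + (j : ℂ))

end

/-!
Shifting the index of the two Pochhammer products gives `θ(qw|q) = -w⁻¹ θ(w|q)`, hence
`θ(q^k w|q) = (-1)^k q^{-k(k-1)/2} w^{-k} θ(w|q)` for all `k ∈ ℤ`. Shifting `z` by `2kr`
leaves the argument of `θ` unchanged, while shifting `z̲` by `kr` multiplies it by `q^k` with
`q = e^{2πiτr}` (resp. `e^{2πiσr}`). In both cases the change of the prefactor `e^φ` cancels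
the change of `θ` up to `e^{2πin}` with `n ∈ ℤ`; this uses `z̲ ∈ ℤ` and `k(k-1)/2 ∈ ℤ`.
-/

lemma multipliable_one_sub_mul_pow (w : ℂ) {q : ℂ} (hq : ‖q‖ < 1) :
    Multipliable fun j : ℕ => 1 - w * q ^ j := by
  simpa only [sub_eq_add_neg] using Complex.multipliable_one_add_of_summable
    ((summable_geometric_of_norm_lt_one hq).mul_left w).neg

lemma pochinf_eq_one_sub_mul (w : ℂ) {q : ℂ} (hq : ‖q‖ < 1) :
    pochinf w q = (1 - w) * pochinf (q * w) q := by
  have hshift : ∀ j : ℕ, 1 - w * q ^ (j + 1) = 1 - q * w * q ^ j := fun j => by ring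
  rw [pochinf, tprod_eq_zero_mul' ((multipliable_one_sub_mul_pow (q * w) hq).congr
    fun j => (hshift j).symm), pow_zero, mul_one, pochinf, tprod_congr hshift]

lemma jtheta_mul_left {w q : ℂ} (hq : ‖q‖ < 1) (hq0 : q ≠ 0) (hw : w ≠ 0) :
    jtheta (q * w) q = -w⁻¹ * jtheta w q := by
  have hinv : q * (q * w)⁻¹ = w⁻¹ := by field_simp
  rw [jtheta, jtheta, hinv, pochinf_eq_one_sub_mul w hq, pochinf_eq_one_sub_mul w⁻¹ hq]
  field_simp
  ring

lemma jtheta_exp_int_mul_add {a b : ℂ} (hb : ‖exp b‖ < 1) (k : ℤ) :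
    jtheta (exp (k * b + a)) (exp b) =
      exp (k * (cπ * I - a) - k * (k - 1) / 2 * b) * jtheta (exp a) (exp b) := by
  set F : ℤ → ℂ := fun k =>
    exp (-(k * (cπ * I - a) - k * (k - 1) / 2 * b)) * jtheta (exp (k * b + a)) (exp b)
  have hF : Function.Periodic F 1 := fun k => by
    have hstep : jtheta (exp ((k + 1 : ℤ) * b + a)) (exp b) =
        exp (cπ * I - (k * b + a)) * jtheta (exp (k * b + a)) (exp b) := by
      have hexp : exp ((k + 1 : ℤ) * b + a) = exp b * exp (k * b + a) := by
        rw [← Complex.exp_add]; push_cast; ring_nf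
      rw [hexp, jtheta_mul_left hb (exp_ne_zero b) (exp_ne_zero _), sub_eq_add_neg,
        Complex.exp_add (cπ * I), exp_neg, cπ, exp_pi_mul_I]
      ring
    simp only [F]
    rw [hstep, ← mul_assoc, ← Complex.exp_add]
    congr 2
    push_cast
    ring
  have hk : F k = F 0 := by simpa using hF.int_mul_eq k
  calc jtheta (exp (k * b + a)) (exp b)
      = exp (k * (cπ * I - a) - k * (k - 1) / 2 * b) * F k := by
        simp only [F]
        rw [← mul_assoc, ← Complex.exp_add, add_neg_cancel, Complex.exp_zero, one_mul]
    _ = _ := by rw [hk]; simp [F]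

lemma e2pi_add (x y : ℂ) : e2pi (x + y) = e2pi x * e2pi y := by
  rw [e2pi, e2pi, e2pi, ← Complex.exp_add, mul_add]

lemma e2pi_add_intCast (x : ℂ) (n : ℤ) : e2pi (x + n) = e2pi x := by
  have hn : e2pi n = 1 := by rw [e2pi, cπ, mul_comm, exp_int_mul_two_pi_mul_I]
  rw [e2pi_add, hn, mul_one]

lemma norm_e2pi_lt_one {x : ℂ} (hx : 0 < x.im) : ‖e2pi x‖ < 1 := by
  rw [e2pi, norm_exp, Real.exp_lt_one_iff]
  simpa [cπ] using mul_pos Real.two_pi_pos hx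

lemma jtheta_e2pi_add_int_mul {y : ℂ} (hy : 0 < y.im) (x : ℂ) (k : ℤ) :
    jtheta (e2pi (x + k * y)) (e2pi y) =
      exp (k * (cπ * I - 2 * cπ * I * x) - k * (k - 1) / 2 * (2 * cπ * I * y)) *
        jtheta (e2pi x) (e2pi y) := by
  have harg : 2 * cπ * I * (x + k * y) = k * (2 * cπ * I * y) + 2 * cπ * I * x := by ring
  simp only [e2pi]
  rw [harg, jtheta_exp_int_mul_add (norm_e2pi_lt_one hy)]

section Periodicity

variable {r : ℕ} (σ τ : ℂ)

lemma thetaTau_periodic_z (hr : r ≠ 0) (z : ℂ) (zb k : ℤ) :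
    thetaTau r σ τ (z + 2 * k * r) zb = thetaTau r σ τ z zb := by
  have harg : e2pi (-(z + 2 * k * r)) = e2pi (-z) := by
    rw [← e2pi_add_intCast _ (2 * k * r)]; push_cast; ring_nf
  rw [thetaTau, thetaTau, harg]
  congr 1
  rw [exp_eq_exp_iff_exists_int]
  refine ⟨k * (r + 1) - 2 * k * zb, ?_⟩
  simp only [phiTau, cπ]
  push_cast
  field_simp
  ring

lemma thetaSigma_periodic_z (hr : r ≠ 0) (z : ℂ) (zb k : ℤ) :
    thetaSigma r σ τ (z + 2 * k * r) zb = thetaSigma r σ τ z zb := by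
  have harg : e2pi (z + 2 * k * r) = e2pi z := by
    rw [← e2pi_add_intCast z (2 * k * r)]; push_cast; ring_nf
  rw [thetaSigma, thetaSigma, harg]
  congr 1
  rw [exp_eq_exp_iff_exists_int]
  refine ⟨2 * k * zb - k * (r - 1), ?_⟩
  simp only [phiSigma, cπ]
  push_cast
  field_simp
  ring

lemma thetaTau_periodic_zb (hr : r ≠ 0) (hτ : 0 < τ.im) (z : ℂ) (zb k : ℤ) :
    thetaTau r σ τ z (zb + k * r) = thetaTau r σ τ z zb := by
  have hq : 0 < (τ * r).im := by
    simpa using mul_pos hτ (Nat.cast_pos.mpr (Nat.pos_of_ne_zero hr))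
  have harg : e2pi (-z) * e2pi (τ * (zb + k * r)) = e2pi (-z + τ * zb + k * (τ * r)) := by
    rw [← e2pi_add]; ring_nf
  rw [thetaTau, thetaTau, harg, jtheta_e2pi_add_int_mul hq, ← mul_assoc, ← Complex.exp_add,
    ← e2pi_add]
  congr 1
  rw [exp_eq_exp_iff_exists_int]
  obtain ⟨t, ht⟩ := Int.even_mul_pred_self k
  have htC : (k : ℂ) * (k - 1) = 2 * t := by exact_mod_cast ht.trans (two_mul t).symm
  refine ⟨t * r + k * zb, ?_⟩
  simp only [phiTau, cπ]
  push_cast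
  field_simp
  linear_combination 6 * r ^ 2 * htC

lemma thetaSigma_periodic_zb (hr : r ≠ 0) (hσ : 0 < σ.im) (z : ℂ) (zb k : ℤ) :
    thetaSigma r σ τ z (zb + k * r) = thetaSigma r σ τ z zb := by
  have hq : 0 < (σ * r).im := by
    simpa using mul_pos hσ (Nat.cast_pos.mpr (Nat.pos_of_ne_zero hr))
  have harg : e2pi z * e2pi (σ * (zb + k * r)) = e2pi (z + σ * zb + k * (σ * r)) := by
    rw [← e2pi_add]; ring_nf
  rw [thetaSigma, thetaSigma, harg, jtheta_e2pi_add_int_mul hq, ← mul_assoc, ← Complex.exp_add,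
    ← e2pi_add]
  congr 1
  rw [exp_eq_exp_iff_exists_int]
  obtain ⟨t, ht⟩ := Int.even_mul_pred_self k
  have htC : (k : ℂ) * (k - 1) = 2 * t := by exact_mod_cast ht.trans (two_mul t).symm
  refine ⟨-(t * r + k * zb), ?_⟩
  simp only [phiSigma, cπ]
  push_cast
  field_simp
  linear_combination -6 * r ^ 2 * htC

end Periodicity

/-- periodicity of the lens theta functions. -/
theorem lens_theta_periodicity (r : ℕ) (hr : 0 < r) (σ τ : ℂ)
    (hσ : 0 < σ.im) (hτ : 0 < τ.im) (k : ℤ) (z : ℂ) (zb : ℤ) :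
    thetaTau r σ τ (z + 2 * (k : ℂ) * (r : ℂ)) (zb : ℂ) = thetaTau r σ τ z (zb : ℂ) ∧
    thetaSigma r σ τ (z + 2 * (k : ℂ) * (r : ℂ)) (zb : ℂ) = thetaSigma r σ τ z (zb : ℂ) ∧
    thetaTau r σ τ z ((zb : ℂ) + (k : ℂ) * (r : ℂ)) = thetaTau r σ τ z (zb : ℂ) ∧
    thetaSigma r σ τ z ((zb : ℂ) + (k : ℂ) * (r : ℂ)) = thetaSigma r σ τ z (zb : ℂ) :=
  ⟨thetaTau_periodic_z σ τ hr.ne' z zb k, thetaSigma_periodic_z σ τ hr.ne' z zb k,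
    thetaTau_periodic_zb σ τ hr.ne' hτ z zb k, thetaSigma_periodic_zb σ τ hr.ne' hσ z zb k⟩
end

section
/- For every integer n, every z ∈ ℂ and every z̲ ∈ ℤ, the lens theta functions satisfy the recurrence relations θ_τ(z+nτ, z̲+n) = θ_τ(z, z̲)·e^{−(nπi/r)(2z+(n−1)τ+r−2z̲−n+1)} and θ_σ(z+nσ, z̲−n) = θ_σ(z, z̲)·e^{−(nπi/r)(2z+(n−1)σ+r−2z̲+n−1)}. -/
open Complex

/-!
Shifting `(z, z̲)` by `(nτ, n)` (resp. `(nσ, -n)`) leaves the argument of `θ` unchanged, so only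
the quadratic prefactor `φ_τ` (resp. `φ_σ`) moves, and its increment is the stated exponent.
-/

theorem e2pi_mul_e2pi (a b : ℂ) : e2pi a * e2pi b = e2pi (a + b) := by
  rw [e2pi, e2pi, e2pi, ← Complex.exp_add, mul_add]

theorem phiTau_shift (r : ℕ) (σ τ z zb n : ℂ) :
    phiTau r σ τ (z + n * τ) (zb + n) =
      phiTau r σ τ z zb +
        -(n * cπ * Complex.I / (r : ℂ)) * (2 * z + (n - 1) * τ + (r : ℂ) - 2 * zb - n + 1) := by
  unfold phiTau
  ring

theorem phiSigma_shift (r : ℕ) (σ τ z zb n : ℂ) :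
    phiSigma r σ τ (z + n * σ) (zb - n) =
      phiSigma r σ τ z zb +
        -(n * cπ * Complex.I / (r : ℂ)) * (2 * z + (n - 1) * σ + (r : ℂ) - 2 * zb + n - 1) := by
  unfold phiSigma
  ring

theorem thetaTau_shift (r : ℕ) (σ τ z zb n : ℂ) :
    thetaTau r σ τ (z + n * τ) (zb + n) =
      thetaTau r σ τ z zb *
        Complex.exp (-(n * cπ * Complex.I / (r : ℂ)) *
          (2 * z + (n - 1) * τ + (r : ℂ) - 2 * zb - n + 1)) := by
  have harg : -(z + n * τ) + τ * (zb + n) = -z + τ * zb := by ring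
  rw [thetaTau, thetaTau, e2pi_mul_e2pi, e2pi_mul_e2pi, harg, phiTau_shift, Complex.exp_add]
  ring

theorem thetaSigma_shift (r : ℕ) (σ τ z zb n : ℂ) :
    thetaSigma r σ τ (z + n * σ) (zb - n) =
      thetaSigma r σ τ z zb *
        Complex.exp (-(n * cπ * Complex.I / (r : ℂ)) *
          (2 * z + (n - 1) * σ + (r : ℂ) - 2 * zb + n - 1)) := by
  have harg : z + n * σ + σ * (zb - n) = z + σ * zb := by ring
  rw [thetaSigma, thetaSigma, e2pi_mul_e2pi, e2pi_mul_e2pi, harg, phiSigma_shift, Complex.exp_add]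
  ring

theorem lens_theta_recurrence_general (r : ℕ) (σ τ : ℂ) (n : ℤ) (z : ℂ) (zb : ℤ) :
    thetaTau r σ τ (z + (n : ℂ) * τ) ((zb : ℂ) + (n : ℂ)) =
      thetaTau r σ τ z (zb : ℂ) *
        Complex.exp (-((n : ℂ) * cπ * Complex.I / (r : ℂ)) *
          (2 * z + ((n : ℂ) - 1) * τ + (r : ℂ) - 2 * (zb : ℂ) - (n : ℂ) + 1)) ∧
    thetaSigma r σ τ (z + (n : ℂ) * σ) ((zb : ℂ) - (n : ℂ)) =
      thetaSigma r σ τ z (zb : ℂ) *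
        Complex.exp (-((n : ℂ) * cπ * Complex.I / (r : ℂ)) *
          (2 * z + ((n : ℂ) - 1) * σ + (r : ℂ) - 2 * (zb : ℂ) + (n : ℂ) - 1)) :=
  ⟨thetaTau_shift r σ τ z zb n, thetaSigma_shift r σ τ z zb n⟩

/-- recurrence relations for the lens theta functions. -/
theorem lens_theta_recurrence (r : ℕ) (hr : 0 < r) (σ τ : ℂ)
    (hσ : 0 < σ.im) (hτ : 0 < τ.im) (n : ℤ) (z : ℂ) (zb : ℤ) :
    thetaTau r σ τ (z + (n : ℂ) * τ) ((zb : ℂ) + (n : ℂ)) =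
      thetaTau r σ τ z (zb : ℂ) *
        Complex.exp (-((n : ℂ) * cπ * Complex.I / (r : ℂ)) *
          (2 * z + ((n : ℂ) - 1) * τ + (r : ℂ) - 2 * (zb : ℂ) - (n : ℂ) + 1)) ∧
    thetaSigma r σ τ (z + (n : ℂ) * σ) ((zb : ℂ) - (n : ℂ)) =
      thetaSigma r σ τ z (zb : ℂ) *
        Complex.exp (-((n : ℂ) * cπ * Complex.I / (r : ℂ)) *
          (2 * z + ((n : ℂ) - 1) * σ + (r : ℂ) - 2 * (zb : ℂ) + (n : ℂ) - 1)) :=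
  lens_theta_recurrence_general r σ τ n z zb
end

section
/- For every z ∈ ℂ and every z̲ ∈ ℤ, the lens triple gamma function Γ⁺_σ satisfies the inversion relation Γ⁺_σ(σ+τ+ω−z, r+1−z̲; σ,τ,ω) = Γ⁺_σ(z, z̲; σ,τ,ω). -/
open Complex

/-! The two factors of `Γ⁺_σ` are invariant separately. The product `γ⁺_σ` is symmetric by
construction. Each `B_{4,4}(·;ω)` is even under the reflection `z ↦ |ω| - z`, and
`z ↦ σ + τ + ω - z` acts on every term of `S₂` and `T₂` as such a reflection; this fixes `S₂`.
In `T₂`, whose discrete argument stays `0`, the reflection instead moves a shift by the period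
`rσ` from one term to a shift by `rτ` in the other, and this is harmless because
`B_{4,4}(z + ω₁) - B_{4,4}(z) = 4 B_{3,3}(z; ω₂, ω₃, ω₄)` does not depend on `ω₁ ≠ 0`. -/

theorem b44_reflect (z a b c d : ℂ) : B44 (a + b + c + d - z) a b c d = B44 z a b c d := by
  unfold B44; ring

theorem b44_add_period_sub (z a b c d : ℂ) (ha : a ≠ 0) :
    B44 (z + a) a b c d - B44 z a b c d = 4 * B33 z b c d := by
  by_cases hbcd : b * c * d = 0
  · have habcd : a * b * c * d = 0 := by linear_combination a * hbcd
    simp only [B44, B33, habcd, hbcd, div_zero, mul_zero]; ring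
  · have hb : b ≠ 0 := by rintro rfl; simp at hbcd
    have hc : c ≠ 0 := by rintro rfl; simp at hbcd
    have hd : d ≠ 0 := by rintro rfl; simp at hbcd
    unfold B44 B33
    field_simp
    ring

theorem sfun_reflect (x a b c : ℂ) : Sfun (a + b + c - x) a b c = Sfun x a b c := by
  unfold Sfun
  rw [show a + b + c - x = a + b + -1 + c - (x - 1) by ring,
    show a + b + -1 + c - (x - 1) - 1 = a + b + -1 + c - x by ring, b44_reflect, b44_reflect,
    add_comm]

theorem sfun_add_period_sub (x a b c : ℂ) (ha : a ≠ 0) :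
    Sfun (x + a) a b c - Sfun x a b c = (B33 x b (-1) c + B33 (x - 1) b (-1) c) / 12 := by
  unfold Sfun
  rw [show x + a - 1 = x - 1 + a by ring]
  linear_combination
    (b44_add_period_sub x a b (-1) c ha + b44_add_period_sub (x - 1) a b (-1) c ha) / 48

theorem s2_inversion (r : ℕ) (σ τ ω z zb : ℂ) :
    S2 r σ τ ω (σ + τ + ω - z) (r + 1 - zb) = S2 r σ τ ω z zb := by
  unfold S2
  rw [show σ + τ + ω - z + (r + 1 - zb) * σ = r * σ + (σ + τ) + (ω + σ) - (z + zb * σ) by ring,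
    show σ + τ + ω - z + (r - (r + 1 - zb)) * τ =
      r * τ + (σ + τ) + (ω - τ) - (z + (r - zb) * τ) by ring,
    sfun_reflect, sfun_reflect]

theorem t2_inversion (r : ℕ) (σ τ ω z : ℂ) (hσ : σ ≠ 0) (hτ : τ ≠ 0) :
    T2 r σ τ ω (σ + τ + ω - z) 0 = T2 r σ τ ω z 0 := by
  unfold T2
  rw [show σ + τ + ω - z + 0 * σ = r * σ + (σ + τ) + ω - (z + r * σ) by ring,
    show σ + τ + ω - z + (r - 0) * τ = r * τ + (σ + τ) + ω - z by ring,
    sfun_reflect, sfun_reflect, zero_mul, add_zero, sub_zero]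
  rcases eq_or_ne (r : ℂ) 0 with hr | hr
  · simp only [hr, zero_mul, add_zero]
  · linear_combination sfun_add_period_sub z _ _ _ (mul_ne_zero hr hσ) -
      sfun_add_period_sub z _ _ _ (mul_ne_zero hr hτ)

theorem phiPlus_inversion (r : ℕ) (σ τ ω z zb : ℂ) (hσ : σ - 1 / 2 ≠ 0) (hτ : τ + 1 / 2 ≠ 0) :
    phiPlus r σ τ ω (σ + τ + ω - z) (r + 1 - zb) = phiPlus r σ τ ω z zb := by
  unfold phiPlus
  rw [show σ + τ + ω - z = σ - 1 / 2 + (τ + 1 / 2) + ω - z by ring, t2_inversion _ _ _ _ _ hσ hτ,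
    s2_inversion]

theorem gammaPlusSigma_inversion (r : ℕ) (σ τ ω z zb : ℂ) :
    gammaPlusSigma r σ τ ω (σ + τ + ω - z) (r + 1 - zb) = gammaPlusSigma r σ τ ω z zb := by
  unfold gammaPlusSigma
  rw [sub_sub_cancel, sub_sub_cancel, mul_comm]

theorem lens_triple_gamma_inversion_general (r : ℕ) (σ τ ω : ℂ)
    (hσ : 0 < σ.im) (hτ : 0 < τ.im) (z : ℂ) (zb : ℤ) :
    GammaPlusSigma r σ τ ω (σ + τ + ω - z) ((r : ℂ) + 1 - (zb : ℂ)) =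
      GammaPlusSigma r σ τ ω z (zb : ℂ) := by
  have hσ' : σ - 1 / 2 ≠ 0 := fun h =>
    hσ.ne' (by simpa using congrArg Complex.im (sub_eq_zero.1 h))
  have hτ' : τ + 1 / 2 ≠ 0 := fun h =>
    hτ.ne' (by simpa using congrArg Complex.im (eq_neg_of_add_eq_zero_left h))
  unfold GammaPlusSigma
  rw [phiPlus_inversion r σ τ ω z zb hσ' hτ', gammaPlusSigma_inversion]

/-- inversion relation for the lens triple gamma function `Γ⁺_σ`. -/
theorem lens_triple_gamma_inversion (r : ℕ) (hr : 0 < r) (σ τ ω : ℂ)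
    (hσ : 0 < σ.im) (hτ : 0 < τ.im) (hω : 0 < ω.im) (z : ℂ) (zb : ℤ) :
    GammaPlusSigma r σ τ ω (σ + τ + ω - z) ((r : ℂ) + 1 - (zb : ℂ)) =
      GammaPlusSigma r σ τ ω z (zb : ℂ) :=
  lens_triple_gamma_inversion_general r σ τ ω hσ hτ z zb
end
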